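/- For a linear code C ⊆ F_{q^m}^n of F_{q^m}-dimension k with minimum sum-rank distance d (with ℓ blocks of length η, n = ℓη, μ = min{η,m}), the Singleton-type bound d ≤ μℓ − (μ/η)k + 1 holds. -/

import Mathlib

noncomputable def blockMat {Fq Fqm : Type*} [Field Fq] [Field Fqm] [Algebra Fq Fqm] {m η : ℕ}
    (b : Module.Basis (Fin m) Fq Fqm) (x : Fin η → Fqm) : Matrix (Fin m) (Fin η) Fq :=
  Matrix.of fun r c => b.repr (x c) r

noncomputable def srWeight {Fq Fqm : Type*} [Field Fq] [Field Fqm] [Algebra Fq Fqm] {m η ℓ : ℕ}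
    (b : Module.Basis (Fin m) Fq Fqm) (x : Fin ℓ → Fin η → Fqm) : ℕ :=
  ∑ i, (blockMat b (x i)).rank

open Finset Module Matrix

lemma rank_le_card_of_cols {K : Type*} [Field K] {a bb : ℕ} (A : Matrix (Fin a) (Fin bb) K)
    (T : Finset (Fin bb)) (h : ∀ j ∉ T, Aᵀ j = 0) : A.rank ≤ T.card := by
  classical
  rw [Matrix.rank_eq_finrank_span_cols]
  have hsub : Submodule.span K (Set.range Aᵀ) ≤
      Submodule.span K (↑(T.image (fun j => Aᵀ j)) : Set (Fin a → K)) := by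
    rw [Submodule.span_le]
    rintro _ ⟨j, rfl⟩
    rw [SetLike.mem_coe]
    by_cases hj : j ∈ T
    · apply Submodule.subset_span
      simp only [Finset.coe_image, Set.mem_image, Finset.mem_coe]
      exact ⟨j, hj, rfl⟩
    · rw [h j hj]
      exact Submodule.zero_mem _
  have h1 := Submodule.finrank_mono (R := K) hsub
  have h2 := finrank_span_finset_le_card (R := K) (T.image (fun j => Aᵀ j))
  have h3 : (T.image (fun j => Aᵀ j)).card ≤ T.card := Finset.card_image_le
  exact le_trans h1 (le_trans h2 h3)

lemma rank_pos_of_entry {K : Type*} [Field K] {a bb : ℕ} {A : Matrix (Fin a) (Fin bb) K}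
    {i : Fin a} {j : Fin bb} (h : A i j ≠ 0) : 0 < A.rank := by
  rw [Matrix.rank_eq_finrank_span_cols]
  have hj : Aᵀ j ≠ 0 := fun h0 => h (by simpa using congrFun h0 i)
  rw [Module.finrank_pos_iff_exists_ne_zero]
  exact ⟨⟨Aᵀ j, Submodule.subset_span ⟨j, rfl⟩⟩, by simpa [Subtype.ext_iff] using hj⟩

/-- If all blocks of `c` have their nonzero positions (as recorded by a set `D` of
(block, position) pairs) confined to `D`, then the sum-rank weight is at most `#D`. -/
lemma srWeight_le_of_support {Fq Fqm : Type*} [Field Fq] [Field Fqm] [Algebra Fq Fqm]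
    {m η ℓ : ℕ} (b : Basis (Fin m) Fq Fqm) (c : Fin ℓ → Fin η → Fqm)
    (D : Finset (Fin ℓ × Fin η)) (h : ∀ p : Fin ℓ × Fin η, p ∉ D → c p.1 p.2 = 0) :
    srWeight b c ≤ D.card := by
  classical
  have hcard : D.card = ∑ i : Fin ℓ, (D.filter fun p => p.1 = i).card :=
    Finset.card_eq_sum_card_fiberwise (fun p _ => Finset.mem_univ p.1)
  rw [srWeight, hcard]
  apply Finset.sum_le_sum
  intro i _
  have := rank_le_card_of_cols (blockMat b (c i))
      ((D.filter fun p => p.1 = i).image Prod.snd) ?_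
  · exact le_trans this Finset.card_image_le
  · intro j hj
    have hnot : (i, j) ∉ D := by
      intro hmemD
      exact hj (Finset.mem_image.mpr ⟨(i, j), Finset.mem_filter.mpr ⟨hmemD, rfl⟩, rfl⟩)
    have hz : c i j = 0 := h (i, j) hnot
    funext r
    simp [blockMat, hz]

/-- Transposed version: nonzero rows confined to `D`. -/
lemma srWeight_le_of_support_rows {Fq Fqm : Type*} [Field Fq] [Field Fqm] [Algebra Fq Fqm]
    {m η ℓ : ℕ} (b : Basis (Fin m) Fq Fqm) (c : Fin ℓ → Fin η → Fqm)
    (D : Finset (Fin ℓ × Fin m))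
    (h : ∀ p : Fin ℓ × Fin m, p ∉ D → ∀ j, b.repr (c p.1 j) p.2 = 0) :
    srWeight b c ≤ D.card := by
  classical
  have hcard : D.card = ∑ i : Fin ℓ, (D.filter fun p => p.1 = i).card :=
    Finset.card_eq_sum_card_fiberwise (fun p _ => Finset.mem_univ p.1)
  rw [srWeight, hcard]
  apply Finset.sum_le_sum
  intro i _
  rw [← Matrix.rank_transpose]
  have := rank_le_card_of_cols (blockMat b (c i))ᵀ
      ((D.filter fun p => p.1 = i).image Prod.snd) ?_
  · exact le_trans this Finset.card_image_le
  · intro r hr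
    have hnot : (i, r) ∉ D := by
      intro hmemD
      exact hr (Finset.mem_image.mpr ⟨(i, r), Finset.mem_filter.mpr ⟨hmemD, rfl⟩, rfl⟩)
    funext j
    simpa [blockMat] using h (i, r) hnot j

/-- Singleton bound in the sum-rank metric: for a linear code `C ⊆ Fqm^(ℓη)` of
`Fqm`-dimension `k` with minimum sum-rank distance `d`, one has
`d ≤ μℓ - (μ/η)k + 1` where `μ = min{η,m}`; stated multiplied through by `η` as
`η·d + μ·k ≤ μ·ℓ·η + η` to avoid rational arithmetic. -/
theorem srSingleton_bound {Fq Fqm : Type*} [Field Fq] [Field Fqm] [Algebra Fq Fqm]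
    {m η ℓ : ℕ} (hη : 0 < η) (hℓ : 0 < ℓ) (hm : 0 < m) (b : Basis (Fin m) Fq Fqm)
    (C : Submodule Fqm (Fin ℓ → Fin η → Fqm)) (k d : ℕ)
    (hk : Module.finrank Fqm C = k)
    (hmem : ∃ c ∈ C, c ≠ 0 ∧ srWeight b c = d)
    (hmin : ∀ c ∈ C, c ≠ 0 → d ≤ srWeight b c) :
    η * d + (min η m) * k ≤ (min η m) * ℓ * η + η := by
  classical
  obtain ⟨c₀, hc₀C, hc₀ne, hc₀w⟩ := hmem
  -- extract a nonzero entry of c₀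
  have hex : ∃ i j, c₀ i j ≠ 0 := by
    by_contra hcon
    push_neg at hcon
    exact hc₀ne (funext fun i => funext fun j => hcon i j)
  obtain ⟨i₀, j₀, hij⟩ := hex
  have hd1 : 1 ≤ d := by
    have hb : b.repr (c₀ i₀ j₀) ≠ 0 :=
      fun h0 => hij ((LinearEquiv.map_eq_zero_iff b.repr).mp h0)
    obtain ⟨r₀, hr₀⟩ := Finsupp.ne_iff.mp hb
    have hpos : 0 < (blockMat b (c₀ i₀)).rank :=
      rank_pos_of_entry (A := blockMat b (c₀ i₀)) (i := r₀) (j := j₀) (by simpa [blockMat] using hr₀)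
    have : 0 < srWeight b c₀ := by
      rw [srWeight]
      exact lt_of_lt_of_le hpos
        (Finset.single_le_sum (f := fun i => (blockMat b (c₀ i)).rank)
          (fun i _ => Nat.zero_le _) (Finset.mem_univ i₀))
    omega
  by_cases hcase : η ≤ m
  · -- μ = η : column puncturing over Fqm
    rw [Nat.min_eq_left hcase]
    have hdle : d ≤ ℓ * η := by
      rw [← hc₀w, srWeight]
      calc ∑ i, (blockMat b (c₀ i)).rank ≤ ∑ _i : Fin ℓ, η :=
            Finset.sum_le_sum (fun i _ => Matrix.rank_le_width _)
        _ = ℓ * η := by simp [Finset.sum_const, Finset.card_univ]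
    obtain ⟨D, -, hD⟩ := Finset.exists_subset_card_eq
      (s := (univ : Finset (Fin ℓ × Fin η))) (n := d - 1)
      (by simp only [Finset.card_univ, Fintype.card_prod, Fintype.card_fin]; omega)
    let φ : C →ₗ[Fqm] ((Dᶜ : Finset (Fin ℓ × Fin η)) → Fqm) :=
      { toFun := fun c s => (c : Fin ℓ → Fin η → Fqm) s.1.1 s.1.2
        map_add' := fun x y => rfl
        map_smul' := fun a x => rfl }
    have hinj : Function.Injective φ := by
      rw [injective_iff_map_eq_zero]
      intro c hc
      by_contra hne
      have hcne : (c : Fin ℓ → Fin η → Fqm) ≠ 0 := by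
        intro h0
        exact hne (Subtype.ext h0)
      have hsupp : ∀ p : Fin ℓ × Fin η, p ∉ D → (c : Fin ℓ → Fin η → Fqm) p.1 p.2 = 0 := by
        intro p hp
        have hpD : p ∈ Dᶜ := Finset.mem_compl.mpr hp
        exact congrFun hc ⟨p, hpD⟩
      have h1 := srWeight_le_of_support b (c : Fin ℓ → Fin η → Fqm) D hsupp
      have h2 := hmin _ c.2 hcne
      omega
    have hle := LinearMap.finrank_le_finrank_of_injective hinj
    rw [hk] at hle
    have hcod : finrank Fqm ((Dᶜ : Finset (Fin ℓ × Fin η)) → Fqm) = ℓ * η - (d - 1) := by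
      rw [Module.finrank_pi]
      simp [Finset.card_compl, hD]
    rw [hcod] at hle
    -- arithmetic
    have hkd : k + d ≤ ℓ * η + 1 := by omega
    calc η * d + η * k = η * (k + d) := by ring
      _ ≤ η * (ℓ * η + 1) := Nat.mul_le_mul_left _ hkd
      _ = η * ℓ * η + η := by ring
  · -- μ = m : row puncturing over Fq
    push_neg at hcase
    have hcase' : m ≤ η := le_of_lt hcase
    rw [Nat.min_eq_right hcase']
    have hdle : d ≤ ℓ * m := by
      rw [← hc₀w, srWeight]
      calc ∑ i, (blockMat b (c₀ i)).rank ≤ ∑ _i : Fin ℓ, m :=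
            Finset.sum_le_sum (fun i _ => Matrix.rank_le_height _)
        _ = ℓ * m := by simp [Finset.sum_const, Finset.card_univ]
    obtain ⟨D, -, hD⟩ := Finset.exists_subset_card_eq
      (s := (univ : Finset (Fin ℓ × Fin m))) (n := d - 1)
      (by simp only [Finset.card_univ, Fintype.card_prod, Fintype.card_fin]; omega)
    let ψ : C →ₗ[Fq] ((Dᶜ : Finset (Fin ℓ × Fin m)) → Fin η → Fq) :=
      { toFun := fun c s j => b.repr ((c : Fin ℓ → Fin η → Fqm) s.1.1 j) s.1.2
        map_add' := by
          intro x y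
          funext s j
          simp
        map_smul' := by
          intro a x
          funext s j
          simp [Submodule.coe_smul_of_tower, _root_.map_smul] }
    have hinj : Function.Injective ψ := by
      rw [injective_iff_map_eq_zero]
      intro c hc
      by_contra hne
      have hcne : (c : Fin ℓ → Fin η → Fqm) ≠ 0 := by
        intro h0
        exact hne (Subtype.ext h0)
      have hsupp : ∀ p : Fin ℓ × Fin m, p ∉ D →
          ∀ j, b.repr ((c : Fin ℓ → Fin η → Fqm) p.1 j) p.2 = 0 := by
        intro p hp j
        have hpD : p ∈ Dᶜ := Finset.mem_compl.mpr hp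
        exact congrFun (congrFun hc ⟨p, hpD⟩) j
      have h1 := srWeight_le_of_support_rows b (c : Fin ℓ → Fin η → Fqm) D hsupp
      have h2 := hmin _ c.2 hcne
      omega
    have hle := LinearMap.finrank_le_finrank_of_injective hinj
    have hCfr : finrank Fq C = m * k := by
      rw [← Module.finrank_mul_finrank Fq Fqm C, hk, Module.finrank_eq_card_basis b,
        Fintype.card_fin]
    have hcod : finrank Fq ((Dᶜ : Finset (Fin ℓ × Fin m)) → Fin η → Fq)
        = (ℓ * m - (d - 1)) * η := by
      rw [Module.finrank_pi_fintype]
      simp [Module.finrank_pi, Finset.card_compl, hD, Finset.sum_const]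
    rw [hCfr, hcod] at hle
    -- arithmetic
    have hA : (ℓ * m - (d - 1)) + (d - 1) = ℓ * m := Nat.sub_add_cancel (by omega)
    have hde : d = (d - 1) + 1 := by omega
    calc η * d + m * k = η * ((d - 1) + 1) + m * k := by rw [← hde]
      _ ≤ η * ((d - 1) + 1) + (ℓ * m - (d - 1)) * η := by
          exact Nat.add_le_add_left hle _
      _ = ((ℓ * m - (d - 1)) + (d - 1)) * η + η := by ring
      _ = m * ℓ * η + η := by rw [hA]; ring
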